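/- Let n = 2k, i ≥ 0, and h a permutation of F_{2^k}. Then for any α ∈ F_{2^n} \ F_{2^k}, the function x ↦ Tr^n_k(α x^{2^i} h(Tr^n_k(x))) is a vectorial bent (n,k)-function, i.e., Tr^k_1(β · Tr^n_k(α x^{2^i}h(Tr^n_k(x)))) is bent for every nonzero β ∈ F_{2^k}. -/

import Mathlib

open Finset

def chr (b : ZMod 2) : ℤ := if b = 0 then 1 else -1

variable {K : Type*} [Field K] [Fintype K] [Algebra (ZMod 2) K]

/-- The absolute trace `Tr^n_1 : F_{2^n} → F_2`. -/
noncomputable def tr (x : K) : ZMod 2 := Algebra.trace (ZMod 2) K x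

/-- The Walsh transform of a Boolean function `f` on `K = F_{2^n}`. -/
noncomputable def walshF (f : K → ZMod 2) (l : K) : ℤ :=
  ∑ x, chr (f x + tr (l * x))

/-- `f` is bent on `K = F_{2^{2k}}`: all Walsh values are `±2^k`. -/
def IsBentF (k : ℕ) (f : K → ZMod 2) : Prop :=
  ∀ l : K, walshF f l = 2 ^ k ∨ walshF f l = -(2 ^ k)

open scoped Classical in
/-- The absolute trace `Tr^k_1` of the subfield `F_{2^k} = {a : K | a^{2^k} = a}`:
for `y` in this subfield, `∑_{j<k} y^{2^j}` lies in the prime field `{0,1}` and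
`trk k y` is the corresponding element of `F_2`. -/
noncomputable def trk (k : ℕ) (y : K) : ZMod 2 :=
  if ∑ j ∈ Finset.range k, y ^ (2 ^ j) = 0 then 0 else 1

/-!
Put `γ = βα`, which lies outside `F = F_{2^k}` (`frobFixed K k`), and `T = Tr^n_k` (`relTr k`).
Since `β ∈ F`, `Tr^k_1(β T(Y)) = Tr^n_1(βY)`, and since `Tr^n_1` is invariant under
`x ↦ x^{2^i}`, the Walsh summand at `l` is `(-1)^{Tr^n_1(m(T(x)) x)}` with
`m(u)^{2^i} = γ h(u) + l^{2^i}`. Writing `x = a + ωb` with `a, b ∈ F` for a fixed `ω ∉ F`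
gives `T(x) = T(ω) b`, and the sum over `a` vanishes unless `m(T(ω) b) ∈ F`, when it is
`±2^k`. Decomposing `l^{2^i} = a' + γb'` with `a', b' ∈ F`, `m(u) ∈ F` holds exactly when
`h(u) = b'`, which has a single solution `u ∈ F` as `h` permutes `F`.
-/

open scoped Classical

instance : CharP K 2 := charP_of_injective_algebraMap (algebraMap (ZMod 2) K).injective 2

variable (K) in
def frobFixed (k : ℕ) : Subfield K := (iterateFrobenius K 2 k).eqLocusField (RingHom.id K)

omit [Fintype K] in
lemma mem_frobFixed {k : ℕ} {a : K} : a ∈ frobFixed K k ↔ a ^ 2 ^ k = a := by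
  simp [frobFixed, RingHom.mem_eqLocusField, iterateFrobenius_def]

omit [Fintype K] in
lemma pow_two_pow_mem_frobFixed_iff {k j : ℕ} {a : K} :
    a ^ 2 ^ j ∈ frobFixed K k ↔ a ∈ frobFixed K k := by
  rw [mem_frobFixed, mem_frobFixed, ← pow_mul, mul_comm, pow_mul]
  exact (iterateFrobenius_inj K 2 j).eq_iff

omit [Fintype K] in
lemma add_mul_mem_frobFixed_iff {k : ℕ} {ω a c : K} (hω : ω ∉ frobFixed K k)
    (ha : a ∈ frobFixed K k) (hc : c ∈ frobFixed K k) :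
    a + ω * c ∈ frobFixed K k ↔ c = 0 := by
  refine ⟨fun h => by_contra fun hc0 => hω ?_, fun h => by simpa [h]⟩
  rw [show ω = (a + ω * c - a) / c by field_simp; ring]
  exact div_mem (sub_mem h ha) hc

def relTr (k : ℕ) (x : K) : K := x + x ^ 2 ^ k

omit [Fintype K] [Algebra (ZMod 2) K] in
lemma relTr_def (k : ℕ) (x : K) : relTr k x = x + x ^ 2 ^ k := rfl

omit [Fintype K] in
lemma relTr_add (k : ℕ) (x y : K) : relTr k (x + y) = relTr k x + relTr k y := by
  simp only [relTr, add_pow_char_pow]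
  ring

omit [Fintype K] in
lemma relTr_mul_of_mem {k : ℕ} (x : K) {b : K} (hb : b ∈ frobFixed K k) :
    relTr k (x * b) = relTr k x * b := by
  rw [relTr, relTr, mul_pow, mem_frobFixed.1 hb, add_mul]

omit [Fintype K] in
lemma relTr_eq_zero_iff {k : ℕ} {x : K} : relTr k x = 0 ↔ x ∈ frobFixed K k := by
  rw [relTr, CharTwo.add_eq_zero, mem_frobFixed, eq_comm]

lemma relTr_mem_frobFixed {k : ℕ} (hcard : Fintype.card K = 2 ^ (2 * k)) (x : K) :
    relTr k x ∈ frobFixed K k := by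
  rw [mem_frobFixed, relTr, add_pow_char_pow, ← pow_mul, ← pow_add, ← two_mul, ← hcard,
    FiniteField.pow_card, add_comm]

omit [Algebra (ZMod 2) K] in
lemma ne_zero_of_card_eq_two_pow_two_mul {k : ℕ} (hcard : Fintype.card K = 2 ^ (2 * k)) :
    k ≠ 0 := by
  rintro rfl
  exact Fintype.one_lt_card.ne' hcard

lemma finrank_eq_of_card {n : ℕ} (hcard : Fintype.card K = 2 ^ n) :
    Module.finrank (ZMod 2) K = n := by
  refine Nat.pow_right_injective le_rfl (?_ : 2 ^ _ = 2 ^ n)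
  rw [← hcard, Module.card_eq_pow_finrank (K := ZMod 2), ZMod.card]

lemma two_pow_le_card_frobFixed {k : ℕ} (hcard : Fintype.card K = 2 ^ (2 * k)) :
    2 ^ k ≤ Fintype.card (frobFixed K k) := by
  have hk := ne_zero_of_card_eq_two_pow_two_mul hcard
  have := Fintype.ofFinite (GaloisField 2 k)
  obtain ⟨f⟩ := FiniteField.nonempty_algHom_of_finrank_dvd (F := ZMod 2) (K := GaloisField 2 k)
    (L := K) (by rw [GaloisField.finrank 2 hk, finrank_eq_of_card hcard]; exact dvd_mul_left k 2)
  have hcardG : Fintype.card (GaloisField 2 k) = 2 ^ k := by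
    rw [Fintype.card_eq_nat_card, GaloisField.card 2 k hk]
  have hmem : ∀ y, f y ∈ frobFixed K k := fun y => by
    rw [mem_frobFixed, ← map_pow, ← hcardG, FiniteField.pow_card]
  rw [← hcardG]
  exact Fintype.card_le_of_injective (fun y => ⟨f y, hmem y⟩)
    fun y z hyz => f.injective (congrArg Subtype.val hyz)

open Polynomial in
lemma card_frobFixed_le {k : ℕ} (hk : k ≠ 0) :
    Fintype.card (frobFixed K k) ≤ 2 ^ k := by
  have h1 : 1 < 2 ^ k := Nat.one_lt_two_pow hk
  have hne : (X ^ 2 ^ k - X : K[X]) ≠ 0 := FiniteField.X_pow_card_sub_X_ne_zero K h1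
  rw [← FiniteField.X_pow_card_sub_X_natDegree_eq K h1, ← Finset.card_univ,
    ← Finset.card_map (Function.Embedding.subtype _)]
  refine card_le_degree_of_subset_roots fun x hx => ?_
  obtain ⟨a, -, rfl⟩ := Finset.mem_map.mp hx
  simp [mem_roots hne, mem_frobFixed.mp a.2]

lemma card_frobFixed {k : ℕ} (hcard : Fintype.card K = 2 ^ (2 * k)) :
    Fintype.card (frobFixed K k) = 2 ^ k :=
  (card_frobFixed_le (ne_zero_of_card_eq_two_pow_two_mul hcard)).antisymm
    (two_pow_le_card_frobFixed hcard)

lemma exists_not_mem_frobFixed {k : ℕ} (hcard : Fintype.card K = 2 ^ (2 * k)) :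
    ∃ ω : K, ω ∉ frobFixed K k := by
  by_contra! hall
  have hle := Fintype.card_le_of_surjective (Subtype.val : frobFixed K k → K)
    fun x => ⟨⟨x, hall x⟩, rfl⟩
  rw [hcard, card_frobFixed hcard] at hle
  have hk := ne_zero_of_card_eq_two_pow_two_mul hcard
  have := Nat.pow_lt_pow_right one_lt_two (show k < 2 * k by omega)
  omega

lemma bijective_add_mul {k : ℕ} (hcard : Fintype.card K = 2 ^ (2 * k)) {ω : K}
    (hω : ω ∉ frobFixed K k) :
    Function.Bijective fun p : frobFixed K k × frobFixed K k => (p.1 : K) + ω * p.2 := by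
  rw [Fintype.bijective_iff_injective_and_card, Fintype.card_prod, card_frobFixed hcard, hcard,
    two_mul, pow_add]
  refine ⟨fun ⟨a, b⟩ ⟨a', b'⟩ heq => ?_, rfl⟩
  have hb : (b : K) - b' = 0 := by
    refine (add_mul_mem_frobFixed_iff hω (sub_mem a.2 a'.2) (sub_mem b.2 b'.2)).1 ?_
    rw [show (a : K) - a' + ω * (b - b') = 0 by linear_combination heq]
    exact zero_mem _
  obtain rfl : b = b' := Subtype.ext (sub_eq_zero.1 hb)
  simpa using heq

noncomputable def frobPow (j : ℕ) : K ≃ₐ[ZMod 2] K :=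
  FiniteField.frobeniusAlgEquivOfAlgebraic (ZMod 2) K ^ j

lemma frobPow_apply (j : ℕ) (x : K) : frobPow j x = x ^ 2 ^ j := by
  rw [frobPow, AlgEquiv.coe_pow, FiniteField.coe_frobeniusAlgEquivOfAlgebraic_iterate, ZMod.card]

lemma tr_frobPow (j : ℕ) (x : K) : tr (frobPow j x) = tr x :=
  Algebra.trace_eq_of_algEquiv _ x

omit [Fintype K] in
lemma tr_add (x y : K) : tr (x + y) = tr x + tr y :=
  map_add _ x y

lemma algebraMap_tr {n : ℕ} (hcard : Fintype.card K = 2 ^ n) (x : K) :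
    algebraMap (ZMod 2) K (tr x) = ∑ j ∈ range n, x ^ 2 ^ j := by
  rw [tr, FiniteField.algebraMap_trace_eq_sum_pow, finrank_eq_of_card hcard, Nat.card_zmod]

lemma trk_relTr {k : ℕ} (hcard : Fintype.card K = 2 ^ (2 * k)) (x : K) :
    trk k (relTr k x) = tr x := by
  have hsum : ∑ j ∈ range k, relTr k x ^ 2 ^ j = algebraMap (ZMod 2) K (tr x) := by
    simp_rw [relTr, add_pow_char_pow, ← pow_mul, ← pow_add]
    rw [algebraMap_tr hcard, two_mul, sum_range_add, sum_add_distrib]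
  obtain htr | htr : tr x = 0 ∨ tr x = 1 := by generalize tr x = b; decide +revert
  all_goals simp [trk, hsum, htr]

lemma tr_eq_zero_of_mem_frobFixed {k : ℕ} (hcard : Fintype.card K = 2 ^ (2 * k)) {a : K}
    (ha : a ∈ frobFixed K k) : tr a = 0 := by
  rw [← trk_relTr hcard, relTr_eq_zero_iff.2 ha]
  simp [trk]

lemma exists_mem_frobFixed_tr_mul_eq_one {k : ℕ} (hcard : Fintype.card K = 2 ^ (2 * k)) {c : K}
    (hc : c ∉ frobFixed K k) : ∃ b ∈ frobFixed K k, tr (c * b) = 1 := by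
  obtain ⟨x, hx⟩ := Algebra.trace_surjective (ZMod 2) K 1
  obtain ⟨⟨a, b⟩, rfl⟩ := (bijective_add_mul hcard hc).2 x
  refine ⟨b, b.2, ?_⟩
  rwa [← tr, tr_add, tr_eq_zero_of_mem_frobFixed hcard a.2, zero_add] at hx

lemma chr_add (a b : ZMod 2) : chr (a + b) = chr a * chr b := by decide +revert

lemma chr_eq_one_or_eq_neg_one (a : ZMod 2) : chr a = 1 ∨ chr a = -1 := by decide +revert

lemma sum_chr_tr_mul {k : ℕ} (hcard : Fintype.card K = 2 ^ (2 * k)) (c : K) :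
    ∑ t : frobFixed K k, chr (tr (c * t)) = if c ∈ frobFixed K k then 2 ^ k else 0 := by
  split_ifs with hc
  · simp [tr_eq_zero_of_mem_frobFixed hcard (mul_mem hc (Subtype.prop _)), chr,
      card_frobFixed hcard]
  obtain ⟨b, hb, htr⟩ := exists_mem_frobFixed_tr_mul_eq_one hcard hc
  have hshift := Equiv.sum_comp (Equiv.addRight (⟨b, hb⟩ : frobFixed K k))
    fun t => chr (tr (c * t))
  simp only [Equiv.coe_addRight, Subfield.coe_add, mul_add, tr_add, htr, chr_add,
    show chr 1 = -1 from rfl, mul_neg_one, sum_neg_distrib] at hshift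
  linarith

lemma sum_chr_tr_comp_relTr_mul_eq_or {k : ℕ} (hcard : Fintype.card K = 2 ^ (2 * k))
    (m : K → K) {u₀ : K} (hu₀ : u₀ ∈ frobFixed K k)
    (hm : ∀ u ∈ frobFixed K k, m u ∈ frobFixed K k ↔ u = u₀) :
    ∑ x, chr (tr (m (relTr k x) * x)) = 2 ^ k ∨
      ∑ x, chr (tr (m (relTr k x) * x)) = -2 ^ k := by
  obtain ⟨ω, hω⟩ := exists_not_mem_frobFixed hcard
  have hτ : relTr k ω ∈ frobFixed K k := relTr_mem_frobFixed hcard ω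
  have hτ0 : relTr k ω ≠ 0 := mt relTr_eq_zero_iff.1 hω
  have hrelTr : ∀ a b : frobFixed K k, relTr k (a + ω * b) = relTr k ω * b := fun a b => by
    rw [relTr_add, relTr_eq_zero_iff.2 a.2, zero_add, relTr_mul_of_mem ω b.2]
  have hinner : ∀ b : frobFixed K k,
      ∑ a : frobFixed K k, chr (tr (m (relTr k ω * b) * (a + ω * b))) =
        chr (tr (m (relTr k ω * b) * (ω * b))) *
          if m (relTr k ω * b) ∈ frobFixed K k then 2 ^ k else 0 := fun b => by
    simp only [mul_add, tr_add, chr_add]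
    rw [← sum_mul, sum_chr_tr_mul hcard, mul_comm]
  let b₀ : frobFixed K k := ⟨u₀ / relTr k ω, div_mem hu₀ hτ⟩
  have hb₀ : relTr k ω * b₀ = u₀ := mul_div_cancel₀ u₀ hτ0
  rw [← (bijective_add_mul hcard hω).sum_comp, Fintype.sum_prod_type_right]
  simp only [hrelTr, hinner]
  rw [Fintype.sum_eq_single b₀ fun b hb => ?_]
  · rw [hb₀, if_pos ((hm u₀ hu₀).2 rfl)]
    rcases chr_eq_one_or_eq_neg_one (tr (m u₀ * (ω * b₀))) with h | h <;> simp [h]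
  · rw [if_neg, mul_zero]
    rw [hm _ (mul_mem hτ b.2)]
    exact fun hu => hb (Subtype.ext (by simp [b₀, ← hu, hτ0]))

theorem stmt13_general (k i : ℕ) (hcard : Fintype.card K = 2 ^ (2 * k))
    (h : K → K)
    (hperm : Set.BijOn h {a : K | a ^ (2 ^ k) = a} {a : K | a ^ (2 ^ k) = a})
    (α : K) (hα : α ^ (2 ^ k) ≠ α) :
    ∀ β : K, β ^ (2 ^ k) = β → β ≠ 0 →
      IsBentF k (fun x =>
        trk k (β * (α * (x ^ (2 ^ i) * h (x + x ^ (2 ^ k))) +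
          (α * (x ^ (2 ^ i) * h (x + x ^ (2 ^ k)))) ^ (2 ^ k)))) := by
  intro β hβ hβ0 l
  have hβF : β ∈ frobFixed K k := mem_frobFixed.2 hβ
  set γ := β * α
  have hγ : γ ∉ frobFixed K k := fun hγ => hα <| mem_frobFixed.1 <| by
    simpa [γ, hβ0] using div_mem hγ hβF
  obtain ⟨⟨a, b⟩, hab⟩ := (bijective_add_mul hcard hγ).2 (l ^ 2 ^ i)
  obtain ⟨u₀, hu₀, hu₀b⟩ := hperm.2.2 (mem_frobFixed.1 b.2)
  let m : K → K := fun u => (frobPow i).symm (γ * h u + l ^ 2 ^ i)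
  have hwalsh : ∀ x : K, trk k (β * relTr k (α * (x ^ 2 ^ i * h (relTr k x)))) + tr (l * x) =
      tr (m (relTr k x) * x) := fun x => by
    rw [mul_comm β, ← relTr_mul_of_mem _ hβF, trk_relTr hcard, ← tr_frobPow i (l * x),
      ← tr_frobPow i (m _ * x), ← tr_add]
    simp only [m, γ, map_mul, AlgEquiv.apply_symm_apply, frobPow_apply]
    ring_nf
  have hm : ∀ u ∈ frobFixed K k, m u ∈ frobFixed K k ↔ u = u₀ := fun u hu => by
    have hhu : h u ∈ frobFixed K k := mem_frobFixed.2 (hperm.1 (mem_frobFixed.1 hu))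
    rw [← pow_two_pow_mem_frobFixed_iff (j := i), ← frobPow_apply, AlgEquiv.apply_symm_apply,
      ← hab, show γ * h u + (a + γ * b) = a + γ * (h u + b) by ring,
      add_mul_mem_frobFixed_iff hγ a.2 (add_mem hhu b.2), CharTwo.add_eq_zero, ← hu₀b]
    exact hperm.2.1.eq_iff (mem_frobFixed.1 hu) hu₀
  simp only [walshF, ← relTr_def, hwalsh]
  exact sum_chr_tr_comp_relTr_mul_eq_or hcard m (mem_frobFixed.2 hu₀) hm

theorem stmt13 (k i : ℕ) (hk : 0 < k) (hcard : Fintype.card K = 2 ^ (2 * k))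
    (h : K → K)
    (hperm : Set.BijOn h {a : K | a ^ (2 ^ k) = a} {a : K | a ^ (2 ^ k) = a})
    (α : K) (hα : α ^ (2 ^ k) ≠ α) :
    ∀ β : K, β ^ (2 ^ k) = β → β ≠ 0 →
      IsBentF k (fun x =>
        trk k (β * (α * (x ^ (2 ^ i) * h (x + x ^ (2 ^ k))) +
          (α * (x ^ (2 ^ i) * h (x + x ^ (2 ^ k)))) ^ (2 ^ k)))) :=
  stmt13_general k i hcard h hperm α hα
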